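/- arXiv:2302.04347 — 2 statements merged into one kernel-verified Lean document; each statement's English description precedes it below -/
import Mathlib

section
/- Let n ≥ 1 and let K be a nonempty compact subset of ℝⁿ. Then |K|ⁿ⁻¹ ≤ ∏_{i=1}^n |P_{e_i^⊥}(K)|, where |K| is the n-dimensional Lebesgue measure of K and |P_{e_i^⊥}(K)| is the (n−1)-dimensional Hausdorff measure of the orthogonal projection of K onto the coordinate hyperplane e_i^⊥ (the Loomis–Whitney inequality). -/
open MeasureTheory Metric Submodule
open scoped ENNReal RealInnerProductSpace

/-- The orthogonal projection of `ℝⁿ` onto a linear subspace `F`, as a map `ℝⁿ → ℝⁿ`. -/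
noncomputable def projCLM {n : ℕ} (F : Submodule ℝ (EuclideanSpace ℝ (Fin n))) :
    EuclideanSpace ℝ (Fin n) →L[ℝ] EuclideanSpace ℝ (Fin n) :=
  F.subtypeL.comp (orthogonalProjection F)

/-- The image `P_F(K)` of a set `K ⊆ ℝⁿ` under the orthogonal projection onto `F`. -/
noncomputable def projSet {n : ℕ} (F : Submodule ℝ (EuclideanSpace ℝ (Fin n)))
    (K : Set (EuclideanSpace ℝ (Fin n))) : Set (EuclideanSpace ℝ (Fin n)) :=
  projCLM F '' K

open Finset in
private theorem lw_key {ι : Type*} [Fintype ι] [DecidableEq ι]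
    {p : ℝ} (hp0 : 0 ≤ p) (hp1 : ((Fintype.card ι - 1 : ℕ) : ℝ) * p = 1)
    {g : ι → (ι → ℝ) → ℝ≥0∞} (hg : ∀ i, Measurable (g i))
    (hind : ∀ i x t, g i (Function.update x i t) = g i x)
    (s : Finset ι) (x : ι → ℝ) :
    (∫⋯∫⁻_s, (fun y => ∏ i, g i y ^ p)) x
      ≤ ∏ i, ((∫⋯∫⁻_(s.erase i), g i) x) ^ p := by
  classical
  induction s using Finset.induction generalizing x with
  | empty => simp
  | @insert i₀ s hi₀ ih =>
    have hF : Measurable fun y => ∏ i, g i y ^ p :=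
      Finset.measurable_prod _ fun i _ => (hg i).pow_const _
    have hGm : ∀ i, Measurable ((∫⋯∫⁻_(s.erase i), g i)) :=
      fun i => (hg i).lmarginal _
    have hup : ∀ i, Measurable fun t => (∫⋯∫⁻_(s.erase i), g i) (Function.update x i₀ t) :=
      fun i => (hGm i).comp (measurable_update x)
    have hsum : ∑ _i ∈ univ.erase i₀, p = 1 := by
      rw [Finset.sum_const, nsmul_eq_mul, Finset.card_erase_of_mem (mem_univ i₀),
        Finset.card_univ]
      exact hp1
    rw [lmarginal_insert _ hF hi₀]
    calc ∫⁻ t, (∫⋯∫⁻_s, (fun y => ∏ i, g i y ^ p)) (Function.update x i₀ t)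
        ≤ ∫⁻ t, ∏ i, ((∫⋯∫⁻_(s.erase i), g i) (Function.update x i₀ t)) ^ p :=
          lintegral_mono fun t => ih _
      _ = ∫⁻ t, ((∫⋯∫⁻_s, g i₀) x) ^ p *
            ∏ i ∈ univ.erase i₀, ((∫⋯∫⁻_(s.erase i), g i) (Function.update x i₀ t)) ^ p := by
          congr 1; funext t
          rw [← Finset.mul_prod_erase univ _ (mem_univ i₀)]
          congr 2
          rw [Finset.erase_eq_of_notMem hi₀, lmarginal_update_of_notMem (hg i₀) hi₀]
          congr 1
          funext z
          exact hind i₀ z t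
      _ = ((∫⋯∫⁻_s, g i₀) x) ^ p *
            ∫⁻ t, ∏ i ∈ univ.erase i₀, ((∫⋯∫⁻_(s.erase i), g i) (Function.update x i₀ t)) ^ p :=
          lintegral_const_mul _ (Finset.measurable_prod _ fun i _ => (hup i).pow_const _)
      _ ≤ ((∫⋯∫⁻_s, g i₀) x) ^ p *
            ∏ i ∈ univ.erase i₀,
              (∫⁻ t, (∫⋯∫⁻_(s.erase i), g i) (Function.update x i₀ t)) ^ p := by
          gcongr
          exact ENNReal.lintegral_prod_norm_pow_le _ (fun i _ => (hup i).aemeasurable) hsum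
            (fun _ _ => hp0)
      _ = ∏ i, ((∫⋯∫⁻_((insert i₀ s).erase i), g i) x) ^ p := by
          rw [← Finset.mul_prod_erase univ _ (mem_univ i₀)]
          congr 1
          · rw [Finset.erase_insert hi₀]
          · refine Finset.prod_congr rfl fun i hi => ?_
            have hii₀ : i ≠ i₀ := (Finset.mem_erase.1 hi).1
            have h2 : i₀ ∉ s.erase i := fun h => hi₀ (Finset.mem_of_mem_erase h)
            rw [Finset.erase_insert_of_ne hii₀.symm, lmarginal_insert _ (hg i) h2]

/-- The Loomis–Whitney inequality: for a nonempty compact set `K ⊆ ℝⁿ`,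
`|K|^{n-1} ≤ ∏ i, |P_{e_i^⊥}(K)|`, where the projections are measured with
`(n-1)`-dimensional Hausdorff measure. -/
theorem loomis_whitney (n : ℕ) (hn : 1 ≤ n)
    (K : Set (EuclideanSpace ℝ (Fin n))) (hK : IsCompact K) (hKne : K.Nonempty) :
    (volume K) ^ (n - 1) ≤
      ∏ i : Fin n, μH[((n : ℝ) - 1)]
        (projSet (ℝ ∙ (EuclideanSpace.single i (1 : ℝ)))ᗮ K) := by
  classical
  -- coordinates of the orthogonal projection
  have hproj : ∀ (i : Fin n) (x : EuclideanSpace ℝ (Fin n)) (j : Fin n), j ≠ i →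
      projCLM (ℝ ∙ (EuclideanSpace.single i (1:ℝ)))ᗮ x j = x j := by
    intro i x j hj
    have h1 : projCLM (ℝ ∙ (EuclideanSpace.single i (1:ℝ)))ᗮ x
        = x - ((orthogonalProjection (ℝ ∙ (EuclideanSpace.single i (1:ℝ))) x :
            EuclideanSpace ℝ (Fin n))) := by
      exact starProjection_orthogonal_val x
    rw [h1, ← starProjection_apply, starProjection_singleton]
    simp [EuclideanSpace.norm_single, EuclideanSpace.inner_single_left,
      EuclideanSpace.single_apply, hj]
  -- the coordinate-restriction maps
  set r : ∀ i : Fin n, EuclideanSpace ℝ (Fin n) → ({j // j ∈ (Finset.univ.erase i)} → ℝ) :=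
    fun i x j => x j.1 with hr
  have hlip : ∀ i, LipschitzWith 1 (r i) := by
    intro i
    refine LipschitzWith.mk_one fun x y => ?_
    refine (dist_pi_le_iff dist_nonneg).2 fun j => ?_
    rw [EuclideanSpace.dist_eq]
    have h1 : dist (r i x j) (r i y j) = Real.sqrt (dist (x j.1) (y j.1) ^ 2) :=
      (Real.sqrt_sq dist_nonneg).symm
    rw [h1]
    exact Real.sqrt_le_sqrt (Finset.single_le_sum (f := fun k => dist (x k) (y k) ^ 2)
      (fun k _ => sq_nonneg _) (Finset.mem_univ j.1))
  set Q : ∀ i : Fin n, Set ({j // j ∈ (Finset.univ.erase i)} → ℝ) := fun i => r i '' K with hQ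
  have hQcomp : ∀ i, IsCompact (Q i) := fun i => hK.image (hlip i).continuous
  -- Hausdorff measure bound
  set H : Fin n → ℝ≥0∞ := fun i =>
    μH[((n : ℝ) - 1)] (projSet (ℝ ∙ (EuclideanSpace.single i (1 : ℝ)))ᗮ K) with hH
  have hQH : ∀ i, volume (Q i) ≤ H i := by
    intro i
    have hd : (0:ℝ) ≤ (n : ℝ) - 1 := by
      have h : (1:ℝ) ≤ n := by exact_mod_cast hn
      linarith
    have himg : Q i = r i '' (projSet (ℝ ∙ (EuclideanSpace.single i (1 : ℝ)))ᗮ K) := by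
      rw [hQ, projSet, Set.image_image]
      refine congrArg (· '' K) ?_
      funext x
      funext j
      exact (hproj i x j.1 (Finset.mem_erase.1 j.2).1).symm
    have hcard : ((n : ℝ) - 1) = ((Fintype.card ↥(Finset.univ.erase i) : ℕ) : ℝ) := by
      rw [Fintype.card_coe, Finset.card_erase_of_mem (Finset.mem_univ i), Finset.card_univ,
        Fintype.card_fin, Nat.cast_sub hn, Nat.cast_one]
    have hμH : (μH[((Fintype.card ↥(Finset.univ.erase i) : ℕ) : ℝ)] :
        Measure ({j // j ∈ (Finset.univ.erase i)} → ℝ)) = volume := hausdorffMeasure_pi_real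
    calc volume (Q i) = μH[((n : ℝ) - 1)] (Q i) := by
          rw [hcard]
          exact (congrArg (fun μ : Measure _ => μ (Q i)) hμH).symm
      _ ≤ H i := by
          rw [himg, hH]
          simpa using (hlip i).hausdorffMeasure_image_le hd _
  rcases Nat.lt_or_ge n 2 with h2 | h2
  · -- case n = 1
    have hn1 : n = 1 := le_antisymm (by omega) hn
    subst hn1
    simp only [Nat.sub_self, pow_zero]
    rw [Fin.prod_univ_one]
    refine le_trans ?_ (hQH 0)
    have hie : IsEmpty {j // j ∈ (Finset.univ.erase (0 : Fin 1))} := by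
      refine ⟨fun j => ?_⟩
      exact (Finset.mem_erase.1 j.2).1 (Subsingleton.elim _ _)
    have hQuniv : Q 0 = Set.univ := by
      have hne : (Q 0).Nonempty := hKne.image _
      haveI := hie
      haveI : Subsingleton ({j // j ∈ (Finset.univ.erase (0 : Fin 1))} → ℝ) :=
        ⟨fun a b => funext fun j => hie.elim j⟩
      exact Subsingleton.eq_univ_of_nonempty hne
    rw [hQuniv, volume_pi, Measure.pi_univ]
    simp
  · -- case n ≥ 2
    set p : ℝ := ((n - 1 : ℕ) : ℝ)⁻¹ with hp
    have hcd : ((n - 1 : ℕ) : ℝ) ≠ 0 := Nat.cast_ne_zero.2 (by omega)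
    have hp0 : 0 ≤ p := inv_nonneg.2 (Nat.cast_nonneg _)
    have hp1 : ((Fintype.card (Fin n) - 1 : ℕ) : ℝ) * p = 1 := by
      rw [Fintype.card_fin]; exact mul_inv_cancel₀ hcd
    set me := (MeasurableEquiv.toLp 2 (Fin n → ℝ)).symm with hme
    set K' : Set (Fin n → ℝ) := me.symm ⁻¹' K with hK'
    have hK'meas : MeasurableSet K' := me.symm.measurable hK.measurableSet
    have hvolK' : volume K' = volume K :=
      (MeasurePreserving.symm _
        (EuclideanSpace.volume_preserving_symm_measurableEquiv_toLp (Fin n))).measure_preimage_equiv K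
    set g : ∀ i : Fin n, (Fin n → ℝ) → ℝ≥0∞ :=
      fun i y => (Q i).indicator 1 (fun j => y j.1) with hg
    have hgm : ∀ i, Measurable (g i) := fun i =>
      ((measurable_const.indicator (hQcomp i).isClosed.measurableSet)).comp
        (measurable_pi_lambda _ fun j => measurable_pi_apply _)
    have hind : ∀ i x t, g i (Function.update x i t) = g i x := by
      intro i x t
      simp only [hg]
      congr 1
      funext j
      exact Function.update_of_ne (Finset.mem_erase.1 j.2).1 t x
    have hpoint : ∀ y, K'.indicator 1 y ≤ ∏ i, g i y ^ p := by
      intro y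
      by_cases hy : y ∈ K'
      · have h1 : ∀ i, g i y = 1 := by
          intro i
          have hmem : (fun j : {j // j ∈ (Finset.univ.erase i)} => y j.1) ∈ Q i := by
            refine ⟨me.symm y, hy, ?_⟩
            rfl
          simp [hg, Set.indicator_of_mem hmem]
        simp [Set.indicator_of_mem hy, h1, ENNReal.one_rpow]
      · simp [Set.indicator_of_notMem hy]
    have hGi : ∀ i, (∫⋯∫⁻_(Finset.univ.erase i), g i) (fun _ => 0) = volume (Q i) := by
      intro i
      rw [lmarginal]
      have heq : ∀ y : ∀ j : {j // j ∈ (Finset.univ.erase i)}, ℝ,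
          g i (Function.updateFinset (fun _ => 0) (Finset.univ.erase i) y)
            = (Q i).indicator 1 y := by
        intro y
        have h3 : (fun j : {j // j ∈ (Finset.univ.erase i)} =>
            Function.updateFinset (fun _ => (0:ℝ)) (Finset.univ.erase i) y j.1) = y := by
          funext j
          simp [Function.updateFinset, j.2]
        simp only [hg]
        rw [h3]
      simp_rw [heq]
      rw [lintegral_indicator_one (hQcomp i).isClosed.measurableSet, ← volume_pi]
    have hmain : volume K' ≤ ∏ i, ((∫⋯∫⁻_(Finset.univ.erase i), g i) (fun _ => 0)) ^ p := by
      have hl := lintegral_eq_lmarginal_univ (μ := fun _ : Fin n => (volume : Measure ℝ))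
        (f := fun y => ∏ i, g i y ^ p) (fun _ => 0)
      rw [← volume_pi] at hl
      calc volume K' = ∫⁻ y, K'.indicator 1 y := (lintegral_indicator_one hK'meas).symm
        _ ≤ ∫⁻ y, ∏ i, g i y ^ p := lintegral_mono hpoint
        _ = (∫⋯∫⁻_Finset.univ, (fun y => ∏ i, g i y ^ p)) (fun _ => 0) := hl
        _ ≤ ∏ i, ((∫⋯∫⁻_(Finset.univ.erase i), g i) (fun _ => 0)) ^ p :=
            lw_key hp0 hp1 hgm hind Finset.univ _
    have hfinal : volume K ≤ ∏ i, (H i) ^ p := by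
      rw [← hvolK']
      refine hmain.trans ?_
      refine Finset.prod_le_prod' ?_
      intro i _
      exact ENNReal.rpow_le_rpow ((hGi i) ▸ hQH i) hp0
    calc volume K ^ (n-1) ≤ (∏ i, (H i) ^ p) ^ (n-1) := pow_le_pow_left' hfinal _
      _ = ∏ i, ((H i) ^ p) ^ (n-1) := by rw [Finset.prod_pow]
      _ = ∏ i, H i := by
          refine Finset.prod_congr rfl fun i _ => ?_
          rw [← ENNReal.rpow_natCast ((H i) ^ p) (n-1), ← ENNReal.rpow_mul]
          rw [show p * ((n-1:ℕ):ℝ) = 1 by rw [mul_comm]; simpa using hp1]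
          exact ENNReal.rpow_one _
end

section
/- Let K be an origin-symmetric convex body in ℝⁿ, let ξ ∈ S^{n−1} and t ∈ ℝ. Then #(K ∩ ξ^⊥) ≥ 2^{1−n} · #(K ∩ (tξ + ξ^⊥)), where #A denotes the number of points of the integer lattice ℤⁿ in the set A (a discrete analogue of Brunn's concavity principle). -/
open MeasureTheory Metric Submodule
open scoped ENNReal RealInnerProductSpace

/-- The integer lattice `ℤⁿ`, viewed as a subset of `ℝⁿ`. -/
def intLattice (n : ℕ) : Set (EuclideanSpace ℝ (Fin n)) :=
  Set.range fun m : Fin n → ℤ => (WithLp.toLp 2 (fun i => (m i : ℝ)) : EuclideanSpace ℝ (Fin n))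

namespace DiscreteBrunnAux

noncomputable section

variable {n : ℕ}

/-- The lattice embedding. -/
def lat (n : ℕ) (m : Fin n → ℤ) : EuclideanSpace ℝ (Fin n) := WithLp.toLp 2 (fun i => (m i : ℝ))

lemma lat_apply (m : Fin n → ℤ) (i : Fin n) : lat n m i = (m i : ℝ) := rfl

lemma lat_inj : Function.Injective (lat n) := by
  intro a b h
  funext i
  have : ((a i : ℝ)) = (b i : ℝ) := congrArg (fun v : EuclideanSpace ℝ (Fin n) => v i) h
  exact_mod_cast this

lemma lat_add (a b : Fin n → ℤ) : lat n (a + b) = lat n a + lat n b := by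
  ext i
  simp [lat_apply, PiLp.add_apply]

lemma lat_neg (a : Fin n → ℤ) : lat n (-a) = -lat n a := by
  ext i
  simp [lat_apply, PiLp.neg_apply]

lemma lat_zero : lat n 0 = 0 := by
  ext i
  simp [lat_apply]

lemma lat_sub (a b : Fin n → ℤ) : lat n (a - b) = lat n a - lat n b := by
  rw [sub_eq_add_neg, lat_add, lat_neg, sub_eq_add_neg]

lemma inner_eq (ξ x : EuclideanSpace ℝ (Fin n)) : ⟪ξ, x⟫ = ∑ i, ξ i * x i := by
  simp [PiLp.inner_apply, RCLike.inner_apply]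
  exact Finset.sum_congr rfl fun _ _ => mul_comm _ _

/-- The parity homomorphism. -/
def par (n : ℕ) : (Fin n → ℤ) →+ (Fin n → ZMod 2) where
  toFun m := fun i => (m i : ZMod 2)
  map_zero' := by funext i; simp
  map_add' a b := by funext i; push_cast; simp

/-- The subgroup of lattice vectors orthogonal to `ξ`. -/
def D (ξ : EuclideanSpace ℝ (Fin n)) : AddSubgroup (Fin n → ℤ) where
  carrier := {m | ⟪ξ, lat n m⟫ = 0}
  zero_mem' := by simp [Set.mem_setOf_eq, lat_zero]
  add_mem' := by
    intro a b ha hb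
    simp only [Set.mem_setOf_eq] at *
    rw [lat_add, inner_add_right, ha, hb, add_zero]
  neg_mem' := by
    intro a ha
    simp only [Set.mem_setOf_eq] at *
    rw [lat_neg, inner_neg_right, ha, neg_zero]

/-- A proper additive subgroup of `(ZMod 2)ⁿ` has at most `2^(n-1)` elements. -/
lemma card_proper (hn : 1 ≤ n) (Q : AddSubgroup (Fin n → ZMod 2)) (hQ : Q ≠ ⊤) :
    Nat.card Q ≤ 2 ^ (n - 1) := by
  have hcard : Nat.card (Fin n → ZMod 2) = 2 ^ n := by
    simp [Nat.card_pi, Nat.card_zmod]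
  have hdvd : Nat.card Q ∣ 2 ^ n := by
    rw [← hcard]; exact AddSubgroup.card_addSubgroup_dvd_card Q
  have hlt : Nat.card Q < 2 ^ n := by
    have hss : (Q : Set (Fin n → ZMod 2)) ⊂ Set.univ := by
      rw [Set.ssubset_univ_iff]
      intro h
      exact hQ (by ext x; simp [← SetLike.mem_coe, h])
    have := Set.ncard_lt_ncard hss (Set.finite_univ)
    rwa [Set.ncard_univ, hcard, ← Nat.card_coe_set_eq] at this
  obtain ⟨k, hk, hQk⟩ := (Nat.dvd_prime_pow Nat.prime_two).mp hdvd
  rw [hQk] at hlt ⊢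
  have hklt : k < n := by
    by_contra h
    exact absurd (Nat.pow_le_pow_right (by norm_num) (le_of_not_gt h)) (not_le.mpr hlt)
  exact Nat.pow_le_pow_right (by norm_num) (by omega)

/-- The parity image of the orthogonal lattice subgroup is proper. -/
lemma map_ne_top (ξ : EuclideanSpace ℝ (Fin n)) (hξ : ‖ξ‖ = 1) :
    (D ξ).map (par n) ≠ ⊤ := by
  intro htop
  have hsingle : ∀ j : Fin n, ∃ v : Fin n → ℤ,
      ⟪ξ, lat n v⟫ = 0 ∧ (par n) v = Pi.single j 1 := by
    intro j
    have hmem : Pi.single j (1 : ZMod 2) ∈ (D ξ).map (par n) := by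
      rw [htop]; exact AddSubgroup.mem_top _
    rcases AddSubgroup.mem_map.mp hmem with ⟨v, hv, hpv⟩
    exact ⟨v, hv, hpv⟩
  choose v hv0 hvpar using hsingle
  set M : Matrix (Fin n) (Fin n) ℤ := Matrix.of fun i j => v j i with hM
  have hmap2 : M.map (Int.cast : ℤ → ZMod 2) = 1 := by
    ext i j
    have h1 := congrFun (hvpar j) i
    simp only [par, AddMonoidHom.coe_mk, ZeroHom.coe_mk] at h1
    simp only [Matrix.map_apply, hM, Matrix.of_apply, h1, Matrix.one_apply,
      Pi.single_apply]
  have hdet2 : ((M.det : ℤ) : ZMod 2) = 1 := by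
    have h := RingHom.map_det (Int.castRingHom (ZMod 2)) M
    rw [RingHom.mapMatrix_apply] at h
    rw [show M.map (Int.castRingHom (ZMod 2)) = M.map (Int.cast : ℤ → ZMod 2) from rfl,
      hmap2] at h
    simpa using h
  have hdet : M.det ≠ 0 := by
    intro h; rw [h] at hdet2; simp at hdet2
  set N : Matrix (Fin n) (Fin n) ℝ := M.map (Int.cast : ℤ → ℝ) with hN
  have hdetN : N.det ≠ 0 := by
    have h := RingHom.map_det (Int.castRingHom ℝ) M
    rw [RingHom.mapMatrix_apply] at h
    rw [show M.map (Int.castRingHom ℝ) = N from rfl] at h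
    rw [← h]
    intro hz
    have hz' : (M.det : ℝ) = 0 := hz
    exact hdet (by exact_mod_cast hz')
  have hNinv : IsUnit N.det := isUnit_iff_ne_zero.mpr hdetN
  set w : Fin n → ℝ := N⁻¹.mulVec (fun i => ξ i) with hw
  have hsolve : N.mulVec w = fun i => ξ i := by
    rw [hw, Matrix.mulVec_mulVec, Matrix.mul_nonsing_inv _ hNinv, Matrix.one_mulVec]
  have hip0 : ⟪ξ, ξ⟫ = 0 := by
    rw [inner_eq]
    have hxi : ∀ i, ξ i = ∑ j, N i j * w j := by
      intro i
      have := congrFun hsolve i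
      rw [← this]
      simp [Matrix.mulVec, dotProduct]
    calc ∑ i, ξ i * ξ i = ∑ i, ∑ j, ξ i * (N i j * w j) := by
          refine Finset.sum_congr rfl fun i _ => ?_
          rw [← Finset.mul_sum, ← hxi i]
      _ = ∑ j, ∑ i, ξ i * (N i j * w j) := Finset.sum_comm
      _ = ∑ j, w j * ∑ i, ξ i * ((v j i : ℤ) : ℝ) := by
          refine Finset.sum_congr rfl fun j _ => ?_
          rw [Finset.mul_sum]
          refine Finset.sum_congr rfl fun i _ => ?_
          simp only [hN, Matrix.map_apply, hM, Matrix.of_apply]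
          ring
      _ = 0 := by
          refine Finset.sum_eq_zero fun j _ => ?_
          have := hv0 j
          rw [inner_eq] at this
          simp only [lat_apply] at this
          rw [this, mul_zero]
  have : (1 : ℝ) = 0 := by
    have h2 := real_inner_self_eq_norm_sq ξ
    rw [hip0, hξ] at h2
    simpa using h2.symm
  norm_num at this

/-- Finiteness of lattice points in a compact set. -/
lemma finite_latset (K : Set (EuclideanSpace ℝ (Fin n))) (hK : IsCompact K) :
    {m : Fin n → ℤ | lat n m ∈ K}.Finite := by
  obtain ⟨C, hC⟩ := hK.isBounded.exists_norm_le
  have hcoord : ∀ m ∈ {m : Fin n → ℤ | lat n m ∈ K}, ∀ i, |(m i : ℝ)| ≤ C := by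
    intro m hm i
    have h1 : |lat n m i| ≤ ‖lat n m‖ := by
      rw [EuclideanSpace.norm_eq]
      refine le_trans ?_ (Real.sqrt_le_sqrt (Finset.single_le_sum
        (f := fun j => ‖lat n m j‖ ^ 2) (fun j _ => sq_nonneg _) (Finset.mem_univ i)))
      rw [Real.sqrt_sq_eq_abs]
      simp [abs_abs]
    exact le_trans h1 (hC _ hm)
  refine Set.Finite.subset (Set.Finite.pi (fun i : Fin n =>
    Set.finite_Icc (-(⌈C⌉)) ⌈C⌉)) ?_
  intro m hm
  simp only [Set.mem_pi, Set.mem_univ, Set.mem_Icc, forall_true_left]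
  intro i
  have := hcoord m hm i
  rw [abs_le] at this
  constructor
  · have : (-(⌈C⌉:ℝ)) ≤ (m i : ℝ) := le_trans (by exact_mod_cast neg_le_neg (Int.le_ceil C)) this.1
    exact_mod_cast this
  · have : (m i : ℝ) ≤ (⌈C⌉ : ℝ) := le_trans this.2 (Int.le_ceil C)
    exact_mod_cast this

/-- Core counting lemma. -/
lemma core (hn : 1 ≤ n) (K : Set (EuclideanSpace ℝ (Fin n)))
    (hK : IsCompact K) (hKconv : Convex ℝ K) (hKsym : K = -K)
    (ξ : EuclideanSpace ℝ (Fin n)) (hξ : ‖ξ‖ = 1) (t : ℝ) :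
    Nat.card {m : Fin n → ℤ | lat n m ∈ K ∧ ⟪ξ, lat n m⟫ = t} ≤
      2 ^ (n - 1) * Nat.card {m : Fin n → ℤ | lat n m ∈ K ∧ ⟪ξ, lat n m⟫ = 0} := by
  classical
  set A : Set (Fin n → ℤ) := {m : Fin n → ℤ | lat n m ∈ K ∧ ⟪ξ, lat n m⟫ = t} with hA
  set B : Set (Fin n → ℤ) := {m : Fin n → ℤ | lat n m ∈ K ∧ ⟪ξ, lat n m⟫ = 0} with hB
  have hAmem : ∀ m, m ∈ A ↔ (lat n m ∈ K ∧ ⟪ξ, lat n m⟫ = t) := fun m => Iff.rfl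
  have hBmem : ∀ m, m ∈ B ↔ (lat n m ∈ K ∧ ⟪ξ, lat n m⟫ = 0) := fun m => Iff.rfl
  have hAfin : A.Finite := (finite_latset K hK).subset (fun m hm => ((hAmem m).mp hm).1)
  have hBfin : B.Finite := (finite_latset K hK).subset (fun m hm => ((hBmem m).mp hm).1)
  have hABi := hAfin.to_subtype
  have hBBi := hBfin.to_subtype
  rcases Set.eq_empty_or_nonempty A with hAe | ⟨x₀, hx₀⟩
  · rw [hAe]
    simp
  -- the halving construction
  have hhalf : ∀ x ∈ A, ∀ y ∈ A, par n x = par n y →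
      ∃ h : Fin n → ℤ, (∀ i, 2 * h i = x i - y i) ∧ h ∈ B := by
    intro x hx y hy hpar
    obtain ⟨hxK, hxt⟩ := (hAmem x).mp hx
    obtain ⟨hyK, hyt⟩ := (hAmem y).mp hy
    have hdvd : ∀ i, (2 : ℤ) ∣ x i - y i := by
      intro i
      have hp := congrFun hpar i
      simp only [par, AddMonoidHom.coe_mk, ZeroHom.coe_mk] at hp
      have hz : ((x i - y i : ℤ) : ZMod 2) = 0 := by
        push_cast
        rw [hp]
        ring
      exact (ZMod.intCast_zmod_eq_zero_iff_dvd _ 2).mp hz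
    refine ⟨fun i => (x i - y i) / 2, fun i => Int.mul_ediv_cancel' (hdvd i), ?_⟩
    set h : Fin n → ℤ := fun i => (x i - y i) / 2 with hh
    have h2 : ∀ i, 2 * h i = x i - y i := fun i => Int.mul_ediv_cancel' (hdvd i)
    have hlat : lat n h = (2⁻¹ : ℝ) • (lat n x - lat n y) := by
      ext i
      have hcast : (2 : ℝ) * (h i : ℝ) = (x i : ℝ) - y i := by
        exact_mod_cast congrArg (Int.cast : ℤ → ℝ) (h2 i)
      simp only [lat_apply, PiLp.smul_apply, PiLp.sub_apply, smul_eq_mul]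
      linarith
    refine (hBmem h).mpr ⟨?_, ?_⟩
    · have hyK' : -(lat n y) ∈ K := by
        rw [hKsym]
        exact Set.neg_mem_neg.mpr hyK
      have hc := hKconv hxK hyK' (by norm_num : (0:ℝ) ≤ 2⁻¹) (by norm_num : (0:ℝ) ≤ 2⁻¹)
        (by norm_num : (2⁻¹ : ℝ) + 2⁻¹ = 1)
      rw [hlat, smul_sub, sub_eq_add_neg, ← smul_neg]
      exact hc
    · rw [hlat, real_inner_smul_right, inner_sub_right, hxt, hyt, sub_self, mul_zero]
  -- choose representatives of parity classes
  choose rep hrepA hrepP using fun c : ↥((par n) '' A) =>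
    (c.2 : ∃ m, m ∈ A ∧ (par n) m = (c : Fin n → ZMod 2))
  have key : ∀ x : ↥A, ∃ b : ↥B, ∀ i,
      2 * (b : Fin n → ℤ) i =
        (x : Fin n → ℤ) i - rep ⟨par n ↑x, Set.mem_image_of_mem _ x.2⟩ i := by
    intro x
    set c : ↥((par n) '' A) := ⟨par n ↑x, Set.mem_image_of_mem _ x.2⟩ with hc
    obtain ⟨h, h2, hBh⟩ := hhalf ↑x x.2 (rep c) (hrepA c) (by rw [hrepP c])
    exact ⟨⟨h, hBh⟩, h2⟩
  choose bfun hbfun using key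
  have hFinj : Function.Injective (fun x : ↥A =>
      ((⟨par n ↑x, Set.mem_image_of_mem _ x.2⟩ : ↥((par n) '' A)), bfun x)) := by
    intro x y hxy
    have h1 : par n (↑x : Fin n → ℤ) = par n (↑y : Fin n → ℤ) := by
      have := congrArg (fun z : (↥((par n) '' A)) × ↥B => (z.1 : Fin n → ZMod 2)) hxy
      simpa using this
    have h2 : bfun x = bfun y := congrArg Prod.snd hxy
    have hceq : (⟨par n ↑x, Set.mem_image_of_mem _ x.2⟩ : ↥((par n) '' A)) =
        ⟨par n ↑y, Set.mem_image_of_mem _ y.2⟩ := Subtype.ext h1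
    apply Subtype.ext
    funext i
    have hxi := hbfun x i
    have hyi := hbfun y i
    rw [hceq, h2] at hxi
    omega
  have hpar_bound : Nat.card ↥((par n) '' A) ≤ 2 ^ (n - 1) := by
    have hmem : ∀ c ∈ (par n) '' A, c - (par n) x₀ ∈ (D ξ).map (par n) := by
      rintro c ⟨y, hy, rfl⟩
      refine AddSubgroup.mem_map.mpr ⟨y - x₀, ?_, (map_sub _ _ _)⟩
      show ⟪ξ, lat n (y - x₀)⟫ = 0
      rw [lat_sub, inner_sub_right, ((hAmem y).mp hy).2, ((hAmem x₀).mp hx₀).2, sub_self]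
    have hinj : Function.Injective (fun c : ↥((par n) '' A) =>
        (⟨(c : Fin n → ZMod 2) - (par n) x₀, hmem c c.2⟩ : ↥((D ξ).map (par n)))) := by
      intro a b hab
      apply Subtype.ext
      have := congrArg (fun z : ↥((D ξ).map (par n)) => (z : Fin n → ZMod 2)) hab
      simpa [sub_left_inj] using this
    exact (Nat.card_le_card_of_injective _ hinj).trans
      (card_proper hn _ (map_ne_top ξ hξ))
  calc Nat.card ↥A ≤ Nat.card ((↥((par n) '' A)) × ↥B) :=
        Nat.card_le_card_of_injective _ hFinj
    _ = Nat.card ↥((par n) '' A) * Nat.card ↥B := Nat.card_prod _ _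
    _ ≤ 2 ^ (n - 1) * Nat.card ↥B := Nat.mul_le_mul_right _ hpar_bound

end

end DiscreteBrunnAux

/-- Discrete analogue of Brunn's concavity principle: for an origin-symmetric convex body
`K ⊆ ℝⁿ`, a unit vector `ξ` and `t ∈ ℝ`,
`#(K ∩ ξ^⊥) ≥ 2^{1-n} #(K ∩ (tξ + ξ^⊥))`, where `#A` is the number of integer lattice
points in `A` and `tξ + ξ^⊥ = {x : ⟨ξ, x⟩ = t}`. -/
theorem discrete_brunn (n : ℕ) (hn : 1 ≤ n)
    (K : Set (EuclideanSpace ℝ (Fin n)))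
    (hK : IsCompact K) (hKconv : Convex ℝ K) (hKint : (interior K).Nonempty) (hKsym : K = -K)
    (ξ : EuclideanSpace ℝ (Fin n)) (hξ : ‖ξ‖ = 1) (t : ℝ) :
    (2 : ℝ) ^ ((1 : ℤ) - (n : ℤ)) *
        (Nat.card ↥(K ∩ {x | ⟪ξ, x⟫ = t} ∩ intLattice n) : ℝ) ≤
      (Nat.card ↥(K ∩ {x | ⟪ξ, x⟫ = 0} ∩ intLattice n) : ℝ) := by
  classical
  open DiscreteBrunnAux in
  have hsets : ∀ s : ℝ, K ∩ {x | ⟪ξ, x⟫ = s} ∩ intLattice n =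
      lat n '' {m | lat n m ∈ K ∧ ⟪ξ, lat n m⟫ = s} := by
    intro s
    ext x
    constructor
    · rintro ⟨⟨hxK, hxs⟩, m, rfl⟩
      exact ⟨m, ⟨hxK, hxs⟩, rfl⟩
    · rintro ⟨m, ⟨h1, h2⟩, rfl⟩
      exact ⟨⟨h1, h2⟩, ⟨m, rfl⟩⟩
  have hcard : ∀ s : ℝ, Nat.card ↥(K ∩ {x | ⟪ξ, x⟫ = s} ∩ intLattice n) =
      Nat.card {m : Fin n → ℤ | lat n m ∈ K ∧ ⟪ξ, lat n m⟫ = s} := by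
    intro s
    rw [hsets s, Nat.card_coe_set_eq, Set.ncard_image_of_injective _ lat_inj,
      ← Nat.card_coe_set_eq]
  rw [hcard t, hcard 0]
  have hmain := DiscreteBrunnAux.core hn K hK hKconv hKsym ξ hξ t
  have hmainR : (Nat.card {m : Fin n → ℤ | lat n m ∈ K ∧ ⟪ξ, lat n m⟫ = t} : ℝ) ≤
      2 ^ (n - 1) * (Nat.card {m : Fin n → ℤ | lat n m ∈ K ∧ ⟪ξ, lat n m⟫ = 0} : ℝ) := by
    exact_mod_cast hmain
  have hpow : (2 : ℝ) ^ ((1 : ℤ) - (n : ℤ)) * (2 : ℝ) ^ (n - 1 : ℕ) = 1 := by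
    rw [← zpow_natCast (2 : ℝ) (n - 1)]
    rw [← zpow_add₀ (by norm_num : (2:ℝ) ≠ 0)]
    have : (1 : ℤ) - n + ((n - 1 : ℕ) : ℤ) = 0 := by
      have : ((n - 1 : ℕ) : ℤ) = (n : ℤ) - 1 := by
        omega
      omega
    rw [this, zpow_zero]
  calc (2 : ℝ) ^ ((1 : ℤ) - (n : ℤ)) *
        (Nat.card {m : Fin n → ℤ | lat n m ∈ K ∧ ⟪ξ, lat n m⟫ = t} : ℝ)
      ≤ (2 : ℝ) ^ ((1 : ℤ) - (n : ℤ)) *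
        (2 ^ (n - 1 : ℕ) * (Nat.card {m : Fin n → ℤ | lat n m ∈ K ∧ ⟪ξ, lat n m⟫ = 0} : ℝ)) := by
        exact mul_le_mul_of_nonneg_left hmainR (by positivity)
    _ = (Nat.card {m : Fin n → ℤ | lat n m ∈ K ∧ ⟪ξ, lat n m⟫ = 0} : ℝ) := by
        rw [← mul_assoc, hpow, one_mul]
end
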